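/- arXiv:2007.13045 — 6 statements merged into one kernel-verified Lean document; each statement's English description precedes it below -/
import Mathlib

section
/- For a ≥ 0 and p > 1/2, the space ℓ^{a,p} of complex bi-infinite (or one-sided) sequences q with norm ‖q‖²_{a,p} = Σ_j |q_j|² ⟨j⟩^{2p} e^{2|j|a} is closed under convolution, and there is a constant c depending only on p such that ‖q * h‖_{a,p} ≤ c ‖q‖_{a,p} ‖h‖_{a,p} for all q, h ∈ ℓ^{a,p}. -/
/-- The squared weight `⟨j⟩^{2p} e^{2|j|a}` on the lattice `ℤ`. -/
noncomputable def seqWeight (a p : ℝ) (j : ℤ) : ℝ :=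
  (max 1 |(j : ℝ)|) ^ (2 * p) * Real.exp (2 * |(j : ℝ)| * a)

/-- The norm of the weighted sequence space `ℓ^{a,p}`. -/
noncomputable def seqNorm (a p : ℝ) (q : ℤ → ℂ) : ℝ :=
  Real.sqrt (∑' j : ℤ, ‖q j‖ ^ 2 * seqWeight a p j)

/-- Convolution of bi-infinite sequences. -/
noncomputable def seqConv (q h : ℤ → ℂ) : ℤ → ℂ := fun j => ∑' k : ℤ, q (j - k) * h k

/-!
Let `v = ⟨·⟩^p e^{|·|a}`, so that `seqWeight a p = v²`, and `m = ⟨·⟩^{-p}`, so that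
`v m = e^{|·|a}`. From
`⟨j⟩ ≤ 2 max (⟨j - k⟩, ⟨k⟩)` and `e^{|j|a} ≤ e^{|j-k|a} e^{|k|a}` one gets
`v j ≤ 2^p (v (j - k) · (v k m k) + (v (j - k) m (j - k)) · v k)`, hence
`|q * h| v ≤ 2^p (Q * (H m) + (Q m) * H)` with `Q = |q| v`, `H = |h| v`.
Young's inequality `‖F * G‖₂ ≤ ‖F‖₂ ‖G‖₁` and Cauchy–Schwarz `‖H m‖₁ ≤ ‖H‖₂ ‖m‖₂` then give
`‖q * h‖ ≤ 2^{p+1} ‖m‖₂ ‖q‖ ‖h‖`, and `m ∈ ℓ²` exactly when `2p > 1`.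
All estimates are done with `ℝ≥0∞`-valued sums, where they hold unconditionally; the
summability of the convolution is read off at the end.
-/

open scoped ENNReal

namespace ENNReal

variable {ι : Type*}

lemma tsum_mul_sq_le_sq_mul_sq (f g : ι → ℝ≥0∞) :
    (∑' i, f i * g i) ^ 2 ≤ (∑' i, f i ^ 2) * ∑' i, g i ^ 2 := by
  rw [ENNReal.tsum_eq_iSup_sum, iSup_pow]
  refine iSup_le fun s => ?_
  have hs := inner_le_Lp_mul_Lq s f g Real.HolderConjugate.two_two
  simp only [rpow_two] at hs
  calc (∑ i ∈ s, f i * g i) ^ 2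
      ≤ ((∑ i ∈ s, f i ^ 2) ^ (1 / 2 : ℝ) * (∑ i ∈ s, g i ^ 2) ^ (1 / 2 : ℝ)) ^ 2 := by
        gcongr
    _ = (∑ i ∈ s, f i ^ 2) * ∑ i ∈ s, g i ^ 2 := by
      rw [mul_pow, ← rpow_two, ← rpow_two, ← rpow_mul, ← rpow_mul]
      norm_num
    _ ≤ (∑' i, f i ^ 2) * ∑' i, g i ^ 2 := by gcongr <;> exact ENNReal.sum_le_tsum s

lemma tsum_mul_sq_le_tsum_mul_tsum_mul_sq (w f : ι → ℝ≥0∞) :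
    (∑' i, w i * f i) ^ 2 ≤ (∑' i, w i) * ∑' i, w i * f i ^ 2 := by
  rw [ENNReal.tsum_eq_iSup_sum, iSup_pow]
  refine iSup_le fun s => ?_
  have hs := inner_le_weight_mul_Lp_of_nonneg s one_le_two w f
  simp only [rpow_two] at hs
  calc (∑ i ∈ s, w i * f i) ^ 2
      ≤ ((∑ i ∈ s, w i) ^ (1 - 2⁻¹ : ℝ) * (∑ i ∈ s, w i * f i ^ 2) ^ (2⁻¹ : ℝ)) ^ 2 := by
        gcongr
    _ = (∑ i ∈ s, w i) * ∑ i ∈ s, w i * f i ^ 2 := by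
      rw [mul_pow, ← rpow_two, ← rpow_two, ← rpow_mul, ← rpow_mul]
      norm_num
    _ ≤ (∑' i, w i) * ∑' i, w i * f i ^ 2 := by gcongr <;> exact ENNReal.sum_le_tsum s

lemma add_sq_le (a b : ℝ≥0∞) : (a + b) ^ 2 ≤ 2 * (a ^ 2 + b ^ 2) := by
  have h := rpow_add_le_mul_rpow_add_rpow a b one_le_two
  norm_num [rpow_two] at h
  exact h

end ENNReal

section Convolution

variable {G : Type*}

noncomputable def ennConv [Sub G] (f g : G → ℝ≥0∞) (x : G) : ℝ≥0∞ := ∑' y, f (x - y) * g y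

lemma ennConv_comm [AddCommGroup G] (f g : G → ℝ≥0∞) : ennConv f g = ennConv g f := by
  ext x
  rw [ennConv, ennConv, ← (Equiv.subLeft x).tsum_eq]
  simp only [Equiv.subLeft_apply, sub_sub_cancel, mul_comm]

lemma tsum_ennConv_sq_le [AddGroup G] (f g : G → ℝ≥0∞) :
    ∑' x, ennConv f g x ^ 2 ≤ (∑' x, f x ^ 2) * (∑' y, g y) ^ 2 := by
  have htranslate (y : G) : ∑' x, f (x - y) ^ 2 = ∑' x, f x ^ 2 :=
    (Equiv.subRight y).tsum_eq fun x => f x ^ 2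
  calc ∑' x, ennConv f g x ^ 2
      ≤ ∑' x, (∑' y, g y) * ∑' y, g y * f (x - y) ^ 2 := by
        gcongr with x
        simpa only [ennConv, mul_comm] using
          ENNReal.tsum_mul_sq_le_tsum_mul_tsum_mul_sq g fun y => f (x - y)
    _ = (∑' y, g y) * ∑' y, g y * ∑' x, f (x - y) ^ 2 := by
        rw [ENNReal.tsum_mul_left, ENNReal.tsum_comm]
        simp only [ENNReal.tsum_mul_left]
    _ = (∑' x, f x ^ 2) * (∑' y, g y) ^ 2 := by
        simp only [htranslate, ENNReal.tsum_mul_right]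
        ring

variable [AddCommGroup G] {W m : G → ℝ≥0∞} {C : ℝ≥0∞}

lemma ennConv_mul_le
    (hW : ∀ x y, W x ≤ C * (W (x - y) * (W y * m y) + W (x - y) * m (x - y) * W y))
    (f g : G → ℝ≥0∞) (x : G) :
    ennConv f g x * W x ≤
      C * (ennConv (f * W) (g * W * m) x + ennConv (f * W * m) (g * W) x) := by
  simp only [ennConv, ← ENNReal.tsum_mul_right, ← ENNReal.tsum_add, ← ENNReal.tsum_mul_left]
  refine ENNReal.tsum_le_tsum fun y => ?_
  calc f (x - y) * g y * W x
      ≤ f (x - y) * g y * (C * (W (x - y) * (W y * m y) + W (x - y) * m (x - y) * W y)) := by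
        gcongr; exact hW x y
    _ = _ := by simp only [Pi.mul_apply]; ring

theorem tsum_ennConv_mul_sq_le
    (hW : ∀ x y, W x ≤ C * (W (x - y) * (W y * m y) + W (x - y) * m (x - y) * W y))
    (f g : G → ℝ≥0∞) :
    ∑' x, (ennConv f g x * W x) ^ 2 ≤
      4 * C ^ 2 * (∑' x, m x ^ 2) * (∑' x, (f x * W x) ^ 2) * ∑' x, (g x * W x) ^ 2 := by
  set F := f * W
  set H := g * W
  have hF : (∑' x, (F * m) x) ^ 2 ≤ (∑' x, F x ^ 2) * ∑' x, m x ^ 2 :=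
    ENNReal.tsum_mul_sq_le_sq_mul_sq F m
  have hH : (∑' x, (H * m) x) ^ 2 ≤ (∑' x, H x ^ 2) * ∑' x, m x ^ 2 :=
    ENNReal.tsum_mul_sq_le_sq_mul_sq H m
  calc ∑' x, (ennConv f g x * W x) ^ 2
      ≤ ∑' x, (C * (ennConv F (H * m) x + ennConv (F * m) H x)) ^ 2 :=
        ENNReal.tsum_le_tsum fun x => pow_le_pow_left₀ zero_le (ennConv_mul_le hW f g x) 2
    _ ≤ C ^ 2 * (2 * (∑' x, ennConv F (H * m) x ^ 2 + ∑' x, ennConv H (F * m) x ^ 2)) := by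
        rw [ennConv_comm (F * m), ← ENNReal.tsum_add, ← ENNReal.tsum_mul_left,
          ← ENNReal.tsum_mul_left]
        gcongr with x
        rw [mul_pow]
        gcongr
        exact ENNReal.add_sq_le _ _
    _ ≤ C ^ 2 * (2 * ((∑' x, F x ^ 2) * (∑' x, (H * m) x) ^ 2 +
          (∑' x, H x ^ 2) * (∑' x, (F * m) x) ^ 2)) := by
        gcongr <;> exact tsum_ennConv_sq_le _ _
    _ ≤ C ^ 2 * (2 * ((∑' x, F x ^ 2) * ((∑' x, H x ^ 2) * ∑' x, m x ^ 2) +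
          (∑' x, H x ^ 2) * ((∑' x, F x ^ 2) * ∑' x, m x ^ 2))) := by gcongr
    _ = _ := by simp only [F, H, Pi.mul_apply]; ring

end Convolution

section Weight

noncomputable def rootWeight (a p x : ℝ) : ℝ := max 1 |x| ^ p * Real.exp (|x| * a)

variable {a p : ℝ}
lemma rootWeight_nonneg (x : ℝ) : 0 ≤ rootWeight a p x := by
  unfold rootWeight; positivity

lemma seqWeight_eq_rootWeight_sq (j : ℤ) : seqWeight a p j = rootWeight a p j ^ 2 := by
  rw [seqWeight, rootWeight, mul_pow, ← Real.rpow_natCast, ← Real.rpow_mul (by positivity),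
    ← Real.exp_nat_mul]
  push_cast
  ring_nf

lemma seqWeight_nonneg (j : ℤ) : 0 ≤ seqWeight a p j := by
  rw [seqWeight_eq_rootWeight_sq]; positivity

lemma max_one_abs_add_rpow_le (hp : 0 ≤ p) (x y : ℝ) :
    max 1 |x + y| ^ p ≤ 2 ^ p * (max 1 |x| ^ p + max 1 |y| ^ p) := by
  set u := max 1 |x|
  set v := max 1 |y|
  have hsum : max 1 |x + y| ≤ 2 * max u v := by
    have := abs_add_le x y
    have := le_max_left 1 |x|
    have := le_max_right 1 |x|
    have := le_max_right 1 |y|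
    have := le_max_left u v
    have := le_max_right u v
    exact max_le (by linarith) (by linarith)
  calc max 1 |x + y| ^ p ≤ (2 * max u v) ^ p := by gcongr
    _ = 2 ^ p * max u v ^ p := Real.mul_rpow zero_le_two (by positivity)
    _ ≤ 2 ^ p * (u ^ p + v ^ p) := by
      gcongr
      rcases le_total u v with huv | huv
      · rw [max_eq_right huv]; exact le_add_of_nonneg_left (by positivity)
      · rw [max_eq_left huv]; exact le_add_of_nonneg_right (by positivity)

lemma rootWeight_add_le (ha : 0 ≤ a) (hp : 0 ≤ p) (x y : ℝ) :
    rootWeight a p (x + y) ≤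
      2 ^ p * (rootWeight a p x * Real.exp (|y| * a) + Real.exp (|x| * a) * rootWeight a p y) := by
  have hexp : Real.exp (|x + y| * a) ≤ Real.exp (|x| * a) * Real.exp (|y| * a) := by
    rw [← Real.exp_add, ← add_mul]
    gcongr
    exact abs_add_le x y
  calc rootWeight a p (x + y)
      ≤ 2 ^ p * (max 1 |x| ^ p + max 1 |y| ^ p) * (Real.exp (|x| * a) * Real.exp (|y| * a)) :=
        mul_le_mul (max_one_abs_add_rpow_le hp x y) hexp (by positivity) (by positivity)
    _ = _ := by unfold rootWeight; ring

lemma rootWeight_mul_rpow_neg (x : ℝ) :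
    rootWeight a p x * max 1 |x| ^ (-p) = Real.exp (|x| * a) := by
  have : 0 < max 1 |x| := lt_max_of_lt_left one_pos
  rw [rootWeight, Real.rpow_neg this.le, mul_right_comm, mul_inv_cancel₀ (by positivity), one_mul]

end Weight

section Sequences

variable {a p : ℝ}

lemma ofReal_rootWeight_le (ha : 0 ≤ a) (hp : 0 ≤ p) (j k : ℤ) :
    ENNReal.ofReal (rootWeight a p j) ≤ ENNReal.ofReal (2 ^ p) *
      (ENNReal.ofReal (rootWeight a p ↑(j - k)) *
          (ENNReal.ofReal (rootWeight a p k) * ENNReal.ofReal (max 1 |(k : ℝ)| ^ (-p))) +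
        ENNReal.ofReal (rootWeight a p ↑(j - k)) *
          ENNReal.ofReal (max 1 |((j - k : ℤ) : ℝ)| ^ (-p)) *
          ENNReal.ofReal (rootWeight a p k)) := by
  simp only [← ENNReal.ofReal_mul (rootWeight_nonneg _), rootWeight_mul_rpow_neg]
  rw [← ENNReal.ofReal_mul (Real.exp_pos _).le,
    ← ENNReal.ofReal_add (mul_nonneg (rootWeight_nonneg _) (Real.exp_pos _).le)
      (mul_nonneg (Real.exp_pos _).le (rootWeight_nonneg _)),
    ← ENNReal.ofReal_mul (by positivity)]
  refine ENNReal.ofReal_le_ofReal ?_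
  simpa [mul_comm] using rootWeight_add_le ha hp ((j - k : ℤ) : ℝ) k

lemma enorm_seqConv_le (q h : ℤ → ℂ) (j : ℤ) :
    ‖seqConv q h j‖ₑ ≤ ennConv (fun j => ‖q j‖ₑ) (fun j => ‖h j‖ₑ) j := by
  simpa only [seqConv, ennConv, enorm_mul] using
    enorm_tsum_le_tsum_enorm (f := fun k => q (j - k) * h k)

lemma norm_sq_mul_seqWeight_nonneg (f : ℤ → ℂ) (j : ℤ) : 0 ≤ ‖f j‖ ^ 2 * seqWeight a p j :=
  mul_nonneg (by positivity) (seqWeight_nonneg j)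

lemma enorm_mul_ofReal_rootWeight_sq (f : ℤ → ℂ) (j : ℤ) :
    (‖f j‖ₑ * ENNReal.ofReal (rootWeight a p j)) ^ 2 =
      ENNReal.ofReal (‖f j‖ ^ 2 * seqWeight a p j) := by
  rw [seqWeight_eq_rootWeight_sq, ← ofReal_norm, ← ENNReal.ofReal_mul (norm_nonneg _),
    ← ENNReal.ofReal_pow (mul_nonneg (norm_nonneg _) (rootWeight_nonneg _)), mul_pow]

theorem tsum_ofReal_seqConv_le (ha : 0 ≤ a) (hp : 0 ≤ p) (q h : ℤ → ℂ) :
    ∑' j, ENNReal.ofReal (‖seqConv q h j‖ ^ 2 * seqWeight a p j) ≤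
      4 * ENNReal.ofReal (2 ^ p) ^ 2 * (∑' k : ℤ, ENNReal.ofReal (max 1 |(k : ℝ)| ^ (-p)) ^ 2) *
        (∑' j, ENNReal.ofReal (‖q j‖ ^ 2 * seqWeight a p j)) *
        ∑' j, ENNReal.ofReal (‖h j‖ ^ 2 * seqWeight a p j) := by
  simp only [← enorm_mul_ofReal_rootWeight_sq]
  calc ∑' j, (‖seqConv q h j‖ₑ * ENNReal.ofReal (rootWeight a p j)) ^ 2
      ≤ ∑' j, (ennConv (fun j => ‖q j‖ₑ) (fun j => ‖h j‖ₑ) j *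
          ENNReal.ofReal (rootWeight a p j)) ^ 2 := by
        gcongr with j; exact enorm_seqConv_le q h j
    _ ≤ _ := tsum_ennConv_mul_sq_le (ofReal_rootWeight_le ha hp) _ _

end Sequences

lemma summable_max_one_abs_int_rpow_neg {b : ℝ} (hb : 1 < b) :
    Summable fun k : ℤ => max 1 |(k : ℝ)| ^ (-b) := by
  refine (Real.summable_abs_int_rpow hb).congr_cofinite ?_
  filter_upwards [(Set.finite_singleton (0 : ℤ)).compl_mem_cofinite] with k hk
  rw [max_eq_right (by exact_mod_cast Int.one_le_abs hk)]

lemma tsum_ofReal_max_one_abs_rpow_neg_sq {p : ℝ} (hp : 1 / 2 < p) :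
    ∑' k : ℤ, ENNReal.ofReal (max 1 |(k : ℝ)| ^ (-p)) ^ 2 =
      ENNReal.ofReal (∑' k : ℤ, max 1 |(k : ℝ)| ^ (-(2 * p))) := by
  have hsq (k : ℤ) : (max 1 |(k : ℝ)| ^ (-p)) ^ 2 = max 1 |(k : ℝ)| ^ (-(2 * p)) := by
    rw [← Real.rpow_natCast, ← Real.rpow_mul (by positivity)]
    ring_nf
  rw [ENNReal.ofReal_tsum_of_nonneg (fun _ => by positivity)
    (summable_max_one_abs_int_rpow_neg (by linarith))]
  exact tsum_congr fun k => by rw [← ENNReal.ofReal_pow (by positivity), hsq]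

lemma summable_and_tsum_le_of_tsum_ofReal_le {ι : Type*} {f : ι → ℝ} {B : ℝ}
    (hf : ∀ i, 0 ≤ f i) (hB : 0 ≤ B) (h : ∑' i, ENNReal.ofReal (f i) ≤ ENNReal.ofReal B) :
    Summable f ∧ ∑' i, f i ≤ B := by
  have hs : Summable f :=
    (ENNReal.summable_toReal (ne_top_of_le_ne_top ENNReal.ofReal_ne_top h)).congr
      fun i => ENNReal.toReal_ofReal (hf i)
  refine ⟨hs, ?_⟩
  rwa [← ENNReal.ofReal_le_ofReal_iff hB, ENNReal.ofReal_tsum_of_nonneg hf hs]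

theorem ellap_hilbert_algebra (p : ℝ) (hp : 1 / 2 < p) :
    ∃ c : ℝ, 0 < c ∧ ∀ a : ℝ, 0 ≤ a → ∀ q h : ℤ → ℂ,
      Summable (fun j : ℤ => ‖q j‖ ^ 2 * seqWeight a p j) →
      Summable (fun j : ℤ => ‖h j‖ ^ 2 * seqWeight a p j) →
      Summable (fun j : ℤ => ‖seqConv q h j‖ ^ 2 * seqWeight a p j) ∧
        seqNorm a p (seqConv q h) ≤ c * seqNorm a p q * seqNorm a p h := by
  set σ := ∑' k : ℤ, max 1 |(k : ℝ)| ^ (-(2 * p))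
  have hσ : 0 < σ :=
    (summable_max_one_abs_int_rpow_neg (by linarith)).tsum_pos (fun _ => by positivity) 0
      (by positivity)
  set K := 4 * (2 ^ p) ^ 2 * σ
  refine ⟨Real.sqrt K, by positivity, fun a ha q h hq hh => ?_⟩
  set X := ∑' j, ‖q j‖ ^ 2 * seqWeight a p j
  set Y := ∑' j, ‖h j‖ ^ 2 * seqWeight a p j
  have hX : 0 ≤ X := tsum_nonneg (norm_sq_mul_seqWeight_nonneg q)
  have hY : 0 ≤ Y := tsum_nonneg (norm_sq_mul_seqWeight_nonneg h)
  have hconv : ∑' j, ENNReal.ofReal (‖seqConv q h j‖ ^ 2 * seqWeight a p j) ≤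
      ENNReal.ofReal (K * (X * Y)) := by
    refine (tsum_ofReal_seqConv_le ha (by linarith) q h).trans_eq ?_
    rw [tsum_ofReal_max_one_abs_rpow_neg_sq hp,
      ← ENNReal.ofReal_tsum_of_nonneg (norm_sq_mul_seqWeight_nonneg q) hq,
      ← ENNReal.ofReal_tsum_of_nonneg (norm_sq_mul_seqWeight_nonneg h) hh,
      ← ENNReal.ofReal_pow (by positivity), ENNReal.ofReal_mul (by positivity),
      ENNReal.ofReal_mul (by positivity), ENNReal.ofReal_mul (by positivity),
      ENNReal.ofReal_mul hX, ENNReal.ofReal_ofNat]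
    ring
  obtain ⟨hsum, hle⟩ := summable_and_tsum_le_of_tsum_ofReal_le
    (norm_sq_mul_seqWeight_nonneg (seqConv q h)) (by positivity) hconv
  refine ⟨hsum, ?_⟩
  calc seqNorm a p (seqConv q h) ≤ Real.sqrt (K * (X * Y)) := Real.sqrt_le_sqrt hle
    _ = Real.sqrt K * seqNorm a p q * seqNorm a p h := by
      rw [Real.sqrt_mul (by positivity), Real.sqrt_mul hX, seqNorm, seqNorm, mul_assoc]
end

section
/- For p > 1/2 there exists c depending only on p such that for all integers j, Σ_{k∈ℤ} ⟨j⟩^{2p} / (⟨j−k⟩^{2p} ⟨k⟩^{2p}) ≤ c², where ⟨n⟩ = max(1,|n|). -/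
/-!
Write `s = 2p > 1` and `⟨x⟩ = max 1 |x|`. Since `j = (j - k) + k`, we have
`⟨j⟩ ≤ 2 max(⟨j - k⟩, ⟨k⟩)`, so each term of the sum is at most
`2^s (⟨j - k⟩^{-s} + ⟨k⟩^{-s})`. Summing over `k` gives `2^s · 2 ∑_n ⟨n⟩^{-s}`,
a bound independent of `j`, and the series converges because `s > 1`.
-/

open Real

noncomputable section

def bracket (x : ℝ) : ℝ := max 1 |x|

lemma one_le_bracket (x : ℝ) : 1 ≤ bracket x := le_max_left _ _

lemma bracket_pos (x : ℝ) : 0 < bracket x := one_pos.trans_le (one_le_bracket x)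

lemma bracket_add_le (x y : ℝ) : bracket (x + y) ≤ 2 * max (bracket x) (bracket y) := by
  have hx : |x| ≤ bracket x := le_max_right _ _
  have hy : |y| ≤ bracket y := le_max_right _ _
  refine max_le (by linarith [one_le_bracket x, le_max_left (bracket x) (bracket y)]) ?_
  linarith [abs_add_le x y, le_max_left (bracket x) (bracket y),
    le_max_right (bracket x) (bracket y)]

lemma summable_bracket_int_rpow_neg {s : ℝ} (hs : 1 < s) :
    Summable fun n : ℤ => bracket n ^ (-s) := by
  refine (summable_abs_int_rpow hs).congr_cofinite ?_
  filter_upwards [(Set.finite_singleton (0 : ℤ)).compl_mem_cofinite] with n hn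
  have h1 : (1 : ℝ) ≤ |(n : ℝ)| := by exact_mod_cast Int.one_le_abs hn
  rw [bracket, max_eq_right h1]

lemma rpow_div_mul_rpow_le_of_le_two_mul_max {a b c s : ℝ} (ha : 0 < a) (hb : 0 < b)
    (hc : 0 ≤ c) (hcab : c ≤ 2 * max a b) (hs : 0 ≤ s) :
    c ^ s / (a ^ s * b ^ s) ≤ 2 ^ s * (a ^ (-s) + b ^ (-s)) := by
  have hmax : max a b ^ s / (a ^ s * b ^ s) ≤ a ^ (-s) + b ^ (-s) := by
    rcases le_total a b with hab | hab
    · rw [max_eq_right hab, mul_comm, ← div_div, div_self (rpow_pos_of_pos hb s).ne', one_div,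
        ← rpow_neg ha.le]
      exact le_add_of_nonneg_right (rpow_nonneg hb.le _)
    · rw [max_eq_left hab, ← div_div, div_self (rpow_pos_of_pos ha s).ne', one_div,
        ← rpow_neg hb.le]
      exact le_add_of_nonneg_left (rpow_nonneg ha.le _)
  calc c ^ s / (a ^ s * b ^ s)
      ≤ (2 * max a b) ^ s / (a ^ s * b ^ s) := by gcongr
    _ = 2 ^ s * (max a b ^ s / (a ^ s * b ^ s)) := by
      rw [mul_rpow zero_le_two (ha.le.trans (le_max_left a b)), mul_div_assoc]
    _ ≤ 2 ^ s * (a ^ (-s) + b ^ (-s)) := by gcongr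

lemma bracket_add_rpow_div_le {s : ℝ} (hs : 0 ≤ s) (x y : ℝ) :
    bracket (x + y) ^ s / (bracket x ^ s * bracket y ^ s)
      ≤ 2 ^ s * (bracket x ^ (-s) + bracket y ^ (-s)) :=
  rpow_div_mul_rpow_le_of_le_two_mul_max (bracket_pos x) (bracket_pos y)
    (bracket_pos _).le (bracket_add_le x y) hs

lemma tsum_bracket_convolution_le {s : ℝ} (hs : 1 < s) (j : ℤ) :
    ∑' k : ℤ, bracket j ^ s / (bracket ((j - k : ℤ) : ℝ) ^ s * bracket k ^ s)
      ≤ 2 ^ s * (2 * ∑' n : ℤ, bracket n ^ (-s)) := by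
  set f : ℤ → ℝ := fun n => bracket n ^ (-s)
  have hf : Summable f := summable_bracket_int_rpow_neg hs
  have hf_shift : Summable fun k => f (j - k) := hf.comp_injective sub_right_injective
  have hbound : Summable fun k => 2 ^ s * (f (j - k) + f k) := (hf_shift.add hf).mul_left _
  have hterm (k : ℤ) : bracket j ^ s / (bracket ((j - k : ℤ) : ℝ) ^ s * bracket k ^ s)
      ≤ 2 ^ s * (f (j - k) + f k) := by
    have hj : (j : ℝ) = ((j - k : ℤ) : ℝ) + k := by push_cast; ring
    rw [hj]
    exact bracket_add_rpow_div_le (by linarith) _ _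
  have hnonneg (k : ℤ) : 0 ≤ bracket j ^ s / (bracket ((j - k : ℤ) : ℝ) ^ s * bracket k ^ s) := by
    have := bracket_pos j; have := bracket_pos ((j - k : ℤ) : ℝ); have := bracket_pos k
    positivity
  calc _ ≤ ∑' k, 2 ^ s * (f (j - k) + f k) :=
        (hbound.of_nonneg_of_le hnonneg hterm).tsum_le_tsum hterm hbound
    _ = 2 ^ s * (2 * ∑' n, f n) := by
      have hshift : ∑' k, f (j - k) = ∑' n, f n := (Equiv.subLeft j).tsum_eq f
      rw [tsum_mul_left, hf_shift.tsum_add hf, hshift, two_mul]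

end

theorem weight_convolution_inequality (p : ℝ) (hp : 1 / 2 < p) :
    ∃ c : ℝ, 0 < c ∧ ∀ j : ℤ,
      ∑' k : ℤ, (max 1 |(j : ℝ)|) ^ (2 * p) /
          ((max 1 |((j - k : ℤ) : ℝ)|) ^ (2 * p) * (max 1 |(k : ℝ)|) ^ (2 * p))
        ≤ c ^ 2 := by
  have hs : 1 < 2 * p := by linarith
  set S := ∑' n : ℤ, bracket n ^ (-(2 * p))
  have hS : 0 < S :=
    (summable_bracket_int_rpow_neg hs).tsum_pos (fun n => (rpow_pos_of_pos (bracket_pos _) _).le)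
      0 (rpow_pos_of_pos (bracket_pos _) _)
  refine ⟨√(2 ^ (2 * p) * (2 * S)), by positivity, fun j => ?_⟩
  rw [sq_sqrt (by positivity)]
  exact tsum_bracket_convolution_le hs j
end

section
/- If A = (A_{ij})_{i,j∈ℤ} is a bounded linear operator on ℓ²(ℤ), then the matrix B with entries B_{ij} = |A_{ij}|/|i−j| for i ≠ j and B_{ii} = 0 also defines a bounded linear operator on ℓ²(ℤ), with operator norm ‖B‖ ≤ (π/√3) ‖A‖. -/
/-! Write `B_ij = |A_ij| · |i - j|⁻¹`. Row `i` of `(|A_ij|)_j` is, up to conjugation, the vector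
`A† e_i`, so its `ℓ²` norm is at most `‖A‖`; every column of `(|i - j|⁻¹)_i` has squared `ℓ²` norm
`∑_{n ≠ 0} n⁻² = π² / 3`. Cauchy–Schwarz in each row, `|(Bx)_i|² ≤ ‖A‖² ∑_j |x_j|² / (i - j)²`,
followed by summing over `i` and exchanging the order of summation, gives
`‖Bx‖² ≤ ‖A‖² (π² / 3) ‖x‖²`. -/

open Real

section RealSeries

variable {ι : Type*}

theorem summable_mul_and_sq_tsum_mul_le {f g : ι → ℝ} (hf : ∀ i, 0 ≤ f i) (hg : ∀ i, 0 ≤ g i)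
    (hf2 : Summable fun i => f i ^ 2) (hg2 : Summable fun i => g i ^ 2) :
    (Summable fun i => f i * g i) ∧
      (∑' i, f i * g i) ^ 2 ≤ (∑' i, f i ^ 2) * ∑' i, g i ^ 2 := by
  obtain ⟨hfg, hle⟩ := Real.summable_and_inner_le_Lp_mul_Lq_tsum_of_nonneg HolderConjugate.two_two
    hf hg (by simpa only [rpow_two] using hf2) (by simpa only [rpow_two] using hg2)
  refine ⟨hfg, ?_⟩
  simp only [rpow_two, ← sqrt_eq_rpow] at hle
  calc (∑' i, f i * g i) ^ 2 ≤ (√(∑' i, f i ^ 2) * √(∑' i, g i ^ 2)) ^ 2 :=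
        pow_le_pow_left₀ (tsum_nonneg fun i => mul_nonneg (hf i) (hg i)) hle 2
    _ = (∑' i, f i ^ 2) * ∑' i, g i ^ 2 := by
        rw [mul_pow, sq_sqrt (tsum_nonneg fun i => sq_nonneg _),
          sq_sqrt (tsum_nonneg fun i => sq_nonneg _)]

theorem summable_and_tsum_tsum_mul_le {b : ι → ι → ℝ} {u : ι → ℝ} {β : ℝ}
    (hb0 : ∀ i j, 0 ≤ b i j) (hb : ∀ j, Summable fun i => b i j) (hβ : ∀ j, ∑' i, b i j ≤ β)
    (hu0 : ∀ j, 0 ≤ u j) (hu : Summable u) :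
    (∀ i, Summable fun j => b i j * u j) ∧ (Summable fun i => ∑' j, b i j * u j) ∧
      ∑' i, ∑' j, b i j * u j ≤ β * ∑' j, u j := by
  have hcol : Summable fun j => (∑' i, b i j) * u j :=
    Summable.of_nonneg_of_le (fun j => mul_nonneg (tsum_nonneg fun i => hb0 i j) (hu0 j))
      (fun j => mul_le_mul_of_nonneg_right (hβ j) (hu0 j)) (hu.mul_left β)
  have hswap : Summable fun p : ι × ι => b p.2 p.1 * u p.1 :=
    (summable_prod_of_nonneg fun p => mul_nonneg (hb0 _ _) (hu0 _)).2
      ⟨fun j => (hb j).mul_right (u j), by simpa only [tsum_mul_right] using hcol⟩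
  have hprod : Summable (Function.uncurry fun i j => b i j * u j) := hswap.prod_symm
  refine ⟨hprod.prod_factor, hprod.prod, ?_⟩
  calc ∑' i, ∑' j, b i j * u j = ∑' j, (∑' i, b i j) * u j := by
        simp only [← hprod.tsum_comm, tsum_mul_right]
    _ ≤ ∑' j, β * u j :=
        hcol.tsum_le_tsum (fun j => mul_le_mul_of_nonneg_right (hβ j) (hu0 j)) (hu.mul_left β)
    _ = β * ∑' j, u j := tsum_mul_left

end RealSeries

namespace lp

variable {ι : Type*} {E : ι → Type*} [∀ i, NormedAddCommGroup (E i)]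

theorem summable_norm_sq (f : lp E 2) : Summable fun i => ‖f i‖ ^ 2 := by
  simpa using (lp.memℓp f).summable (p := 2) (by norm_num)

theorem norm_sq_eq_tsum_norm_sq (f : lp E 2) : ‖f‖ ^ 2 = ∑' i, ‖f i‖ ^ 2 := by
  simpa using lp.norm_rpow_eq_tsum (p := 2) (by norm_num) f

end lp

theorem memℓp_two_of_summable_norm_sq {ι : Type*} {E : ι → Type*} [∀ i, NormedAddCommGroup (E i)]
    {f : ∀ i, E i} (h : Summable fun i => ‖f i‖ ^ 2) : Memℓp f 2 :=
  memℓp_gen (by simpa using h)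

section MatrixOperators

variable {ι 𝕜 : Type*} [RCLike 𝕜]

theorem summable_mul_and_norm_tsum_mul_sq_le {c x : ι → 𝕜} {a b : ι → ℝ}
    (hc : ∀ j, ‖c j‖ ≤ a j * b j) (ha0 : ∀ j, 0 ≤ a j) (hb0 : ∀ j, 0 ≤ b j)
    (ha : Summable fun j => a j ^ 2) (hbx : Summable fun j => b j ^ 2 * ‖x j‖ ^ 2) :
    (Summable fun j => c j * x j) ∧
      ‖∑' j, c j * x j‖ ^ 2 ≤ (∑' j, a j ^ 2) * ∑' j, b j ^ 2 * ‖x j‖ ^ 2 := by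
  have hbx' : Summable fun j => (b j * ‖x j‖) ^ 2 := by simpa only [mul_pow] using hbx
  obtain ⟨hsum, hcs⟩ := summable_mul_and_sq_tsum_mul_le ha0
    (fun j => mul_nonneg (hb0 j) (norm_nonneg (x j))) ha hbx'
  have hpt : ∀ j, ‖c j * x j‖ ≤ a j * (b j * ‖x j‖) := fun j => by
    rw [norm_mul, ← mul_assoc]
    exact mul_le_mul_of_nonneg_right (hc j) (norm_nonneg _)
  have hcx : Summable fun j => c j * x j := .of_norm_bounded hsum hpt
  refine ⟨hcx, ?_⟩
  have hnorm : ‖∑' j, c j * x j‖ ≤ ∑' j, a j * (b j * ‖x j‖) :=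
    (norm_tsum_le_tsum_norm hcx.norm).trans (hcx.norm.tsum_le_tsum hpt hsum)
  calc ‖∑' j, c j * x j‖ ^ 2 ≤ (∑' j, a j * (b j * ‖x j‖)) ^ 2 :=
        pow_le_pow_left₀ (norm_nonneg _) hnorm 2
    _ ≤ _ := by simpa only [mul_pow] using hcs

variable {C : ι → ι → 𝕜} {a b : ι → ι → ℝ} {α β : ℝ}

theorem summable_and_tsum_norm_tsum_mul_sq_le (hC : ∀ i j, ‖C i j‖ ≤ a i j * b i j)
    (ha0 : ∀ i j, 0 ≤ a i j) (hb0 : ∀ i j, 0 ≤ b i j)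
    (ha : ∀ i, Summable fun j => a i j ^ 2) (hα : ∀ i, ∑' j, a i j ^ 2 ≤ α ^ 2)
    (hb : ∀ j, Summable fun i => b i j ^ 2) (hβ : ∀ j, ∑' i, b i j ^ 2 ≤ β ^ 2)
    (x : lp (fun _ : ι => 𝕜) 2) :
    (∀ i, Summable fun j => C i j * x j) ∧ (Summable fun i => ‖∑' j, C i j * x j‖ ^ 2) ∧
      ∑' i, ‖∑' j, C i j * x j‖ ^ 2 ≤ (α * β) ^ 2 * ‖x‖ ^ 2 := by
  obtain ⟨hrow, hcol, htot⟩ := summable_and_tsum_tsum_mul_le (fun i j => sq_nonneg (b i j)) hb hβ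
    (fun j => sq_nonneg ‖x j‖) (lp.summable_norm_sq x)
  have hi : ∀ i, (Summable fun j => C i j * x j) ∧
      ‖∑' j, C i j * x j‖ ^ 2 ≤ α ^ 2 * ∑' j, b i j ^ 2 * ‖x j‖ ^ 2 := fun i => by
    obtain ⟨hs, hle⟩ := summable_mul_and_norm_tsum_mul_sq_le (hC i) (ha0 i) (hb0 i) (ha i) (hrow i)
    exact ⟨hs, hle.trans (mul_le_mul_of_nonneg_right (hα i) (tsum_nonneg fun j => by positivity))⟩
  have hsq : Summable fun i => ‖∑' j, C i j * x j‖ ^ 2 :=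
    .of_nonneg_of_le (fun i => sq_nonneg _) (fun i => (hi i).2) (hcol.mul_left _)
  refine ⟨fun i => (hi i).1, hsq, ?_⟩
  calc ∑' i, ‖∑' j, C i j * x j‖ ^ 2 ≤ ∑' i, α ^ 2 * ∑' j, b i j ^ 2 * ‖x j‖ ^ 2 :=
        hsq.tsum_le_tsum (fun i => (hi i).2) (hcol.mul_left _)
    _ ≤ α ^ 2 * (β ^ 2 * ∑' j, ‖x j‖ ^ 2) := by
        rw [tsum_mul_left]
        exact mul_le_mul_of_nonneg_left htot (sq_nonneg α)
    _ = (α * β) ^ 2 * ‖x‖ ^ 2 := by rw [lp.norm_sq_eq_tsum_norm_sq]; ring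

theorem exists_continuousLinearMap_matrix_of_norm_le_mul (hC : ∀ i j, ‖C i j‖ ≤ a i j * b i j)
    (ha0 : ∀ i j, 0 ≤ a i j) (hb0 : ∀ i j, 0 ≤ b i j)
    (ha : ∀ i, Summable fun j => a i j ^ 2) (hα : ∀ i, ∑' j, a i j ^ 2 ≤ α ^ 2)
    (hb : ∀ j, Summable fun i => b i j ^ 2) (hβ : ∀ j, ∑' i, b i j ^ 2 ≤ β ^ 2)
    (hα0 : 0 ≤ α) (hβ0 : 0 ≤ β) :
    ∃ T : lp (fun _ : ι => 𝕜) 2 →L[𝕜] lp (fun _ : ι => 𝕜) 2,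
      (∀ x i, T x i = ∑' j, C i j * x j) ∧ ‖T‖ ≤ α * β := by
  have key := summable_and_tsum_norm_tsum_mul_sq_le hC ha0 hb0 ha hα hb hβ
  let L : lp (fun _ : ι => 𝕜) 2 →ₗ[𝕜] lp (fun _ : ι => 𝕜) 2 :=
    { toFun x := ⟨fun i => ∑' j, C i j * x j, memℓp_two_of_summable_norm_sq (key x).2.1⟩
      map_add' x y := lp.ext <| funext fun i => by
        simp only [lp.coeFn_add, Pi.add_apply, mul_add]
        exact ((key x).1 i).tsum_add ((key y).1 i)
      map_smul' c x := lp.ext <| funext fun i => by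
        simp only [lp.coeFn_smul, Pi.smul_apply, smul_eq_mul, RingHom.id_apply, mul_left_comm _ c,
          tsum_mul_left] }
  have hbound : ∀ x, ‖L x‖ ≤ α * β * ‖x‖ := fun x => by
    refine (pow_le_pow_iff_left₀ (norm_nonneg _) (by positivity) two_ne_zero).1 ?_
    rw [lp.norm_sq_eq_tsum_norm_sq, mul_pow]
    exact (key x).2.2
  exact ⟨L.mkContinuous (α * β) hbound, fun x i => rfl,
    LinearMap.mkContinuous_norm_le _ (mul_nonneg hα0 hβ0) _⟩

end MatrixOperators

section RowsOfBoundedOperators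

variable {ι 𝕜 : Type*} [RCLike 𝕜] [DecidableEq ι]

theorem norm_apply_single_eq_norm_adjoint_apply
    (A : lp (fun _ : ι => 𝕜) 2 →L[𝕜] lp (fun _ : ι => 𝕜) 2) (i j : ι) :
    ‖A (lp.single 2 j 1) i‖ = ‖A.adjoint (lp.single 2 i 1) j‖ := by
  have h := A.adjoint_inner_right (lp.single 2 j 1) (lp.single 2 i 1)
  rw [lp.inner_single_left, lp.inner_single_right] at h
  simpa using congr_arg norm h.symm

theorem summable_and_tsum_norm_apply_single_sq_le
    (A : lp (fun _ : ι => 𝕜) 2 →L[𝕜] lp (fun _ : ι => 𝕜) 2) (i : ι) :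
    (Summable fun j => ‖A (lp.single 2 j 1) i‖ ^ 2) ∧
      ∑' j, ‖A (lp.single 2 j 1) i‖ ^ 2 ≤ ‖A‖ ^ 2 := by
  simp only [norm_apply_single_eq_norm_adjoint_apply A i]
  refine ⟨lp.summable_norm_sq _, ?_⟩
  rw [← lp.norm_sq_eq_tsum_norm_sq]
  have hadj : ‖A.adjoint (lp.single 2 i 1)‖ ≤ ‖A‖ := by
    simpa [lp.norm_single] using A.adjoint.le_opNorm (lp.single 2 i (1 : 𝕜))
  exact pow_le_pow_left₀ (norm_nonneg _) hadj 2

end RowsOfBoundedOperators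

-- The `n = 0` term is `1 / 0 = 0`.
theorem hasSum_one_div_int_sq : HasSum (fun n : ℤ => 1 / (n : ℝ) ^ 2) (π ^ 2 / 3) := by
  have hpos : HasSum (fun n : ℕ => 1 / (((n + 1 : ℕ) : ℤ) : ℝ) ^ 2) (π ^ 2 / 6) := by
    simpa using (hasSum_nat_add_iff' 1).2 hasSum_zeta_two
  have hneg : HasSum (fun n : ℕ => 1 / ((-(n + 1 : ℕ) : ℤ) : ℝ) ^ 2) (π ^ 2 / 6) := by
    simpa only [Int.cast_neg, neg_sq] using hpos
  convert HasSum.of_add_one_of_neg_add_one (f := fun n : ℤ => 1 / (n : ℝ) ^ 2)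
    (by exact_mod_cast hpos) (by exact_mod_cast hneg) using 1
  simp only [Int.cast_zero]
  ring

theorem hasSum_inv_abs_sub_sq (j : ℤ) :
    HasSum (fun i : ℤ => |(i : ℝ) - j|⁻¹ ^ 2) (π ^ 2 / 3) := by
  rw [← (Equiv.addRight j).hasSum_iff]
  convert hasSum_one_div_int_sq using 2 with n
  simp

theorem divided_matrix_bounded (A : lp (fun _ : ℤ => ℂ) 2 →L[ℂ] lp (fun _ : ℤ => ℂ) 2) :
    ∃ B : lp (fun _ : ℤ => ℂ) 2 →L[ℂ] lp (fun _ : ℤ => ℂ) 2,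
      (∀ i j : ℤ, (B (lp.single 2 j 1) : ∀ _ : ℤ, ℂ) i =
        if i = j then 0
        else ((‖(A (lp.single 2 j 1) : ∀ _ : ℤ, ℂ) i‖ / (|i - j| : ℝ) : ℝ) : ℂ)) ∧
      ‖B‖ ≤ Real.pi / Real.sqrt 3 * ‖A‖ := by
  set a : ℤ → ℤ → ℝ := fun i j => ‖A (lp.single 2 j 1) i‖
  -- `b i i = |0|⁻¹ = 0` produces the zero diagonal.
  set b : ℤ → ℤ → ℝ := fun i j => |(i : ℝ) - j|⁻¹
  have hβ : (π / √3) ^ 2 = π ^ 2 / 3 := by rw [div_pow, sq_sqrt zero_le_three]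
  obtain ⟨B, hB, hBnorm⟩ := exists_continuousLinearMap_matrix_of_norm_le_mul
    (C := fun i j => ((a i j * b i j : ℝ) : ℂ)) (fun i j => by simp [a, b])
    (fun i j => norm_nonneg _) (fun i j => by positivity)
    (fun i => (summable_and_tsum_norm_apply_single_sq_le A i).1)
    (fun i => (summable_and_tsum_norm_apply_single_sq_le A i).2)
    (fun j => (hasSum_inv_abs_sub_sq j).summable)
    (fun j => (hβ ▸ (hasSum_inv_abs_sub_sq j).tsum_eq).le) (norm_nonneg A) (by positivity)
  refine ⟨B, fun i j => ?_, hBnorm.trans_eq (mul_comm _ _)⟩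
  rw [hB, tsum_eq_single j fun k hk => by simp [Pi.single_eq_of_ne hk]]
  split_ifs with hij <;> simp [a, b, hij, div_eq_mul_inv]
end

section
/- For every integer b ≥ 1, every v ≥ 0, and 0 < σ ≤ 1/20, one has √( 2^b Σ_{k∈ℤ^b} |k|⁴ [ (1+v²)(|k|+1)^{2b+2} ]⁴ e^{-2|k|σ} ) ≤ (16(2b+3)/e)^{4b+6} · σ^{-(5b+6)}, provided 2^{9b+8}(1+v²)⁴·4^b ≤ 4^{8b+12}. -/
/-!
The polynomial weight is absorbed by half of the exponential: with `m = 8b + 12`,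
`|k|⁴ (|k| + 1)^(8b+8) ≤ (|k| + 1)^m` and `t^m ≤ (m / (eσ))^m e^(σt)`, the latter being the `m`-th power
of `s ≤ e^(s-1)` at `s = σt/m`. The remaining `e^(-σ|k|)` factorises over the coordinates of `k`,
and `∑_{n ∈ ℤ} e^(-σ|n|) = 2 / (1 - e^(-σ)) - 1 ≤ 1 + 2/σ`. The rest is bookkeeping of constants,
using `16 (2b + 3) = 4m`.
-/

open Real Finset

theorem pow_le_div_exp_one_mul_pow_mul_exp {σ y : ℝ} (hσ : 0 < σ) (hy : 0 ≤ y) (m : ℕ) :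
    y ^ m ≤ (m / (exp 1 * σ)) ^ m * exp (σ * y) := by
  rcases m.eq_zero_or_pos with rfl | hm
  · simpa using one_le_exp (by positivity : 0 ≤ σ * y)
  have hm' : (0 : ℝ) < m := Nat.cast_pos.mpr hm
  have hy_le : y ≤ m / (exp 1 * σ) * exp (σ * y / m) := by
    have h := add_one_le_exp (σ * y / m - 1)
    rw [sub_add_cancel, exp_sub, le_div_iff₀ (exp_pos 1)] at h
    rw [div_mul_eq_mul_div, le_div_iff₀ (by positivity)]
    calc y * (exp 1 * σ) = m * (σ * y / m * exp 1) := by field_simp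
      _ ≤ m * exp (σ * y / m) := by gcongr
  calc y ^ m ≤ (m / (exp 1 * σ) * exp (σ * y / m)) ^ m := pow_le_pow_left₀ hy hy_le m
    _ = (m / (exp 1 * σ)) ^ m * exp (σ * y) := by
      rw [mul_pow, ← exp_nat_mul, mul_div_cancel₀ _ hm'.ne']

theorem pow_mul_add_one_pow_mul_exp_le {σ x : ℝ} (hσ : 0 < σ) (hx : 0 ≤ x) (p q : ℕ) :
    x ^ p * (x + 1) ^ q * exp (-2 * x * σ)
      ≤ exp σ * (((p + q : ℕ) : ℝ) / (exp 1 * σ)) ^ (p + q) * exp (-σ * x) := by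
  have hpoly : x ^ p * (x + 1) ^ q ≤ (x + 1) ^ (p + q) := by
    rw [pow_add]; gcongr; linarith
  calc x ^ p * (x + 1) ^ q * exp (-2 * x * σ)
      ≤ (((p + q : ℕ) : ℝ) / (exp 1 * σ)) ^ (p + q) * exp (σ * (x + 1)) * exp (-2 * x * σ) :=
        mul_le_mul_of_nonneg_right
          (hpoly.trans (pow_le_div_exp_one_mul_pow_mul_exp hσ (by linarith) _)) (exp_pos _).le
    _ = exp σ * (((p + q : ℕ) : ℝ) / (exp 1 * σ)) ^ (p + q) * exp (-σ * x) := by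
        rw [mul_assoc, ← exp_add, show σ * (x + 1) + -2 * x * σ = σ + -σ * x by ring, exp_add]
        ring

theorem hasSum_exp_neg_mul_abs_int {σ : ℝ} (hσ : 0 < σ) :
    HasSum (fun n : ℤ => exp (-σ * |(n : ℝ)|)) (2 / (1 - exp (-σ)) - 1) := by
  have hr : exp (-σ) < 1 := exp_lt_one_iff.mpr (by linarith)
  have hgeom := hasSum_geometric_of_lt_one (exp_pos (-σ)).le hr
  have key : ∀ n : ℤ, exp (-σ * |(n : ℝ)|) = exp (-σ) ^ n.natAbs := fun n => by
    rw [← Int.cast_abs, ← Int.natCast_natAbs, Int.cast_natCast, mul_comm, exp_nat_mul]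
  simp_rw [key]
  have H := HasSum.of_nat_of_neg (f := fun n : ℤ => exp (-σ) ^ n.natAbs)
    (by simpa using hgeom) (by simpa using hgeom)
  rwa [Int.natAbs_zero, pow_zero, ← two_mul, ← div_eq_mul_inv] at H

theorem tsum_exp_neg_mul_abs_int_le {σ : ℝ} (hσ : 0 < σ) :
    ∑' n : ℤ, exp (-σ * |(n : ℝ)|) ≤ 1 + 2 / σ := by
  rw [(hasSum_exp_neg_mul_abs_int hσ).tsum_eq]
  have hgap : σ / (1 + σ) ≤ 1 - exp (-σ) := by
    have h := add_one_le_exp σ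
    rw [exp_neg, div_le_iff₀ (by positivity)]
    have := exp_pos σ
    field_simp
    nlinarith
  calc 2 / (1 - exp (-σ)) - 1 ≤ 2 / (σ / (1 + σ)) - 1 := by gcongr
    _ = 1 + 2 / σ := by field_simp; ring

theorem hasSum_fin_pi_prod {β : Type*} {f : β → ℝ} (hf0 : ∀ x, 0 ≤ f x) (hf : Summable f)
    (n : ℕ) : HasSum (fun k : Fin n → β => ∏ i, f (k i)) ((∑' x, f x) ^ n) := by
  induction n with
  | zero => simp
  | succ n ih =>
    rw [pow_succ', ← (Fin.consEquiv fun _ => β).hasSum_iff]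
    have hprod_nonneg : ∀ k : Fin n → β, 0 ≤ ∏ i, f (k i) := fun k => prod_nonneg fun i _ => hf0 _
    have hsummable := Summable.mul_of_nonneg (g := fun k : Fin n → β => ∏ i, f (k i))
      hf ih.summable hf0 hprod_nonneg
    have hcons : (fun k => ∏ i, f (k i)) ∘ Fin.consEquiv (fun _ => β)
        = fun p : β × (Fin n → β) => f p.1 * ∏ i, f (p.2 i) := by
      funext p
      simp [Fin.consEquiv, Fin.prod_univ_succ]
    rw [hcons]
    exact HasSum.mul (f := f) (g := fun k : Fin n → β => ∏ i, f (k i)) hf.hasSum ih hsummable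

theorem hasSum_exp_neg_mul_l1norm {σ : ℝ} (hσ : 0 < σ) (b : ℕ) :
    HasSum (fun k : Fin b → ℤ => exp (-σ * ∑ i, |(k i : ℝ)|))
      ((∑' n : ℤ, exp (-σ * |(n : ℝ)|)) ^ b) := by
  simp_rw [mul_sum, exp_sum]
  exact hasSum_fin_pi_prod (fun _ => (exp_pos _).le) (hasSum_exp_neg_mul_abs_int hσ).summable b

theorem tsum_comp_l1norm_le {σ C : ℝ} (hσ : 0 < σ) {φ : ℝ → ℝ}
    (hφ0 : ∀ x, 0 ≤ x → 0 ≤ φ x) (hφ : ∀ x, 0 ≤ x → φ x ≤ C * exp (-σ * x)) (b : ℕ) :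
    ∑' k : Fin b → ℤ, φ (∑ i, |(k i : ℝ)|) ≤ C * (1 + 2 / σ) ^ b := by
  have hC : 0 ≤ C := by simpa using (hφ0 0 le_rfl).trans (hφ 0 le_rfl)
  have hl1 : ∀ k : Fin b → ℤ, 0 ≤ ∑ i, |(k i : ℝ)| := fun k => sum_nonneg fun i _ => abs_nonneg _
  have hdom := (hasSum_exp_neg_mul_l1norm hσ b).mul_left C
  calc ∑' k : Fin b → ℤ, φ (∑ i, |(k i : ℝ)|)
      ≤ ∑' k : Fin b → ℤ, C * exp (-σ * ∑ i, |(k i : ℝ)|) :=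
        Summable.tsum_le_tsum (fun k => hφ _ (hl1 k))
          (hdom.summable.of_nonneg_of_le (fun k => hφ0 _ (hl1 k)) fun k => hφ _ (hl1 k))
          hdom.summable
    _ = C * (∑' n : ℤ, exp (-σ * |(n : ℝ)|)) ^ b := hdom.tsum_eq
    _ ≤ C * (1 + 2 / σ) ^ b := by
        gcongr
        exact tsum_exp_neg_mul_abs_int_le hσ

theorem pow_four_mul_weight_pow_four_mul_exp_le {σ x : ℝ} (P : ℝ) (b : ℕ) (hσ : 0 < σ)
    (hx : 0 ≤ x) :
    x ^ 4 * (P * (x + 1) ^ (2 * b + 2)) ^ 4 * exp (-2 * x * σ)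
      ≤ P ^ 4 * exp σ * (((8 * b + 12 : ℕ) : ℝ) / (exp 1 * σ)) ^ (8 * b + 12) * exp (-σ * x) := by
  have h := pow_mul_add_one_pow_mul_exp_le hσ hx 4 (8 * b + 8)
  rw [show 4 + (8 * b + 8) = 8 * b + 12 by omega] at h
  calc x ^ 4 * (P * (x + 1) ^ (2 * b + 2)) ^ 4 * exp (-2 * x * σ)
      = P ^ 4 * (x ^ 4 * (x + 1) ^ (8 * b + 8) * exp (-2 * x * σ)) := by ring
    _ ≤ P ^ 4 * (exp σ * (((8 * b + 12 : ℕ) : ℝ) / (exp 1 * σ)) ^ (8 * b + 12) * exp (-σ * x)) := by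
        gcongr
    _ = _ := by ring

theorem two_pow_mul_weight_constant_le {σ P : ℝ} {b : ℕ} (hσ0 : 0 < σ) (hσ1 : σ ≤ 1)
    (hP : (2 : ℝ) ^ (9 * b + 8) * P ^ 4 * 4 ^ b ≤ 4 ^ (8 * b + 12)) :
    2 ^ b * (P ^ 4 * exp σ * (((8 * b + 12 : ℕ) : ℝ) / (exp 1 * σ)) ^ (8 * b + 12)
        * (1 + 2 / σ) ^ b)
      ≤ ((16 * (2 * (b : ℝ) + 3) / exp 1) ^ (4 * b + 6) / σ ^ (5 * b + 6)) ^ 2 := by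
  set M : ℝ := ((8 * b + 12 : ℕ) : ℝ)
  have hσ_le : 1 + 2 / σ ≤ 4 / σ := by
    have : 1 ≤ 2 / σ := by rw [le_div_iff₀ hσ0]; linarith
    linarith [show 4 / σ = 2 / σ + 2 / σ by ring]
  have hexp : exp σ ≤ 2 ^ (8 * b + 8) := calc
    exp σ ≤ exp 1 := exp_le_exp.mpr hσ1
    _ ≤ 2 ^ 2 := by linarith [exp_one_lt_d9]
    _ ≤ 2 ^ (8 * b + 8) := pow_le_pow_right₀ one_le_two (by omega)
  have hconst : 2 ^ b * P ^ 4 * exp σ * 4 ^ b ≤ 4 ^ (8 * b + 12) := calc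
    2 ^ b * P ^ 4 * exp σ * 4 ^ b ≤ 2 ^ b * P ^ 4 * 2 ^ (8 * b + 8) * 4 ^ b := by gcongr
    _ = 2 ^ (9 * b + 8) * P ^ 4 * 4 ^ b := by ring
    _ ≤ 4 ^ (8 * b + 12) := hP
  have hinv : 1 ≤ σ⁻¹ := (one_le_inv₀ hσ0).mpr hσ1
  calc 2 ^ b * (P ^ 4 * exp σ * (M / (exp 1 * σ)) ^ (8 * b + 12) * (1 + 2 / σ) ^ b)
      ≤ 2 ^ b * (P ^ 4 * exp σ * (M / (exp 1 * σ)) ^ (8 * b + 12) * (4 / σ) ^ b) := by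
        gcongr
    _ = (2 ^ b * P ^ 4 * exp σ * 4 ^ b) * (M / exp 1) ^ (8 * b + 12)
          * σ⁻¹ ^ (8 * b + 12 + b) := by
        field_simp; ring
    _ ≤ 4 ^ (8 * b + 12) * (M / exp 1) ^ (8 * b + 12) * σ⁻¹ ^ (8 * b + 12 + 2 * b) :=
        mul_le_mul (mul_le_mul_of_nonneg_right hconst (by positivity))
          (pow_le_pow_right₀ hinv (by omega)) (by positivity) (by positivity)
    _ = _ := by
        rw [show 16 * (2 * (b : ℝ) + 3) = 4 * M by push_cast [M]; ring, div_pow _ _ 2, ← pow_mul,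
          ← pow_mul, show (4 * b + 6) * 2 = 8 * b + 12 by ring,
          show (5 * b + 6) * 2 = 8 * b + 12 + 2 * b by ring]
        ring

theorem kam_lattice_sum_bound_general (b : ℕ) (v : ℕ) (σ : ℝ)
    (hσ0 : 0 < σ) (hσ : σ ≤ 1 / 20)
    (hyp : (2 : ℝ) ^ (9 * b + 8) * (1 + (v : ℝ) ^ 2) ^ 4 * 4 ^ b ≤ 4 ^ (8 * b + 12)) :
    Real.sqrt (2 ^ b * ∑' k : Fin b → ℤ,
        (∑ i, |(k i : ℝ)|) ^ 4 *
          ((1 + (v : ℝ) ^ 2) * ((∑ i, |(k i : ℝ)|) + 1) ^ (2 * b + 2)) ^ 4 *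
          Real.exp (-2 * (∑ i, |(k i : ℝ)|) * σ))
      ≤ (16 * (2 * (b : ℝ) + 3) / Real.exp 1) ^ (4 * b + 6) / σ ^ (5 * b + 6) := by
  rw [sqrt_le_left (by positivity)]
  refine le_trans ?_ (two_pow_mul_weight_constant_le hσ0 (by linarith) hyp)
  gcongr
  exact tsum_comp_l1norm_le hσ0
    (φ := fun x => x ^ 4 * ((1 + (v : ℝ) ^ 2) * (x + 1) ^ (2 * b + 2)) ^ 4 * exp (-2 * x * σ))
    (fun x hx => by positivity)
    (fun x hx => pow_four_mul_weight_pow_four_mul_exp_le _ b hσ0 hx) b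

theorem kam_lattice_sum_bound (b : ℕ) (hb : 1 ≤ b) (v : ℕ) (σ : ℝ)
    (hσ0 : 0 < σ) (hσ : σ ≤ 1 / 20)
    (hyp : (2 : ℝ) ^ (9 * b + 8) * (1 + (v : ℝ) ^ 2) ^ 4 * 4 ^ b ≤ 4 ^ (8 * b + 12)) :
    Real.sqrt (2 ^ b * ∑' k : Fin b → ℤ,
        (∑ i, |(k i : ℝ)|) ^ 4 *
          ((1 + (v : ℝ) ^ 2) * ((∑ i, |(k i : ℝ)|) + 1) ^ (2 * b + 2)) ^ 4 *
          Real.exp (-2 * (∑ i, |(k i : ℝ)|) * σ))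
      ≤ (16 * (2 * (b : ℝ) + 3) / Real.exp 1) ^ (4 * b + 6) / σ ^ (5 * b + 6) :=
  kam_lattice_sum_bound_general b v σ hσ0 hσ hyp
end

section
/- Let Ω_j = √(j⁴ + m) for j ≥ 0 with m > 0, and for l = (l_j)_{j≥0} ∈ ℤ^{(∞)} with finite support and |l| := Σ|l_j| ≤ 2, define ⟨l⟩₂ = max(1, |Σ_j j² l_j|). Then ⟨l, Ω⟩/⟨l⟩₂ → 1 as ⟨l⟩₂ → ∞; in particular there exists β > 0 such that |⟨l, Ω⟩| > β ⟨l⟩₂ for all such l with ⟨l, Ω⟩ ≠ 0. -/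
/-!
Write `S = ∑ j² l_j` and `Ω_j = √(j⁴ + m)`. Since `j² ≤ Ω_j ≤ j² + √m`, the pairing `⟨l, Ω⟩`
differs from `S` by at most `2√m` when `|l| ≤ 2`, which gives the limit.
For the lower bound, either `±l` has nonnegative coefficients, and then
`|⟨l, Ω⟩| ≥ max(|S|, √m)`, or `l` has coefficients of both signs, and then `|l| ≤ 2` forces
`l = e_j - e_k`, where `Ω_j - Ω_k = (j⁴ - k⁴) / (Ω_j + Ω_k)` is at least `(j² - k²) / (1 + 2√m)`,
because `Ω_j + Ω_k ≤ (1 + 2√m)(j² + k²)`.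
-/

noncomputable def pairing (l : ℕ →₀ ℤ) (w : ℕ → ℝ) : ℝ :=
  ∑ j ∈ l.support, (l j : ℝ) * w j

theorem abs_abs_div_max_one_sub_one_le {T S : ℝ} (hS : 1 ≤ |S|) :
    |(|T|) / max 1 |S| - 1| ≤ |T - S| / |S| := by
  rw [max_eq_right hS, div_sub_one (by positivity), abs_div, abs_abs]
  exact div_le_div_of_nonneg_right (abs_abs_sub_abs_le_abs_sub T S) (abs_nonneg _)

section Pairing

variable (l : ℕ →₀ ℤ) {w v : ℕ → ℝ}

theorem pairing_neg (w : ℕ → ℝ) : pairing (-l) w = -pairing l w := by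
  simp [pairing, Finsupp.support_neg, Finset.sum_neg_distrib]

theorem abs_pairing_sub_pairing_le {C : ℝ} (hwv : ∀ j, |w j - v j| ≤ C) :
    |pairing l w - pairing l v| ≤ ((∑ j ∈ l.support, |l j| : ℤ) : ℝ) * C := by
  unfold pairing
  rw [← Finset.sum_sub_distrib, Int.cast_sum, Finset.sum_mul]
  refine (Finset.abs_sum_le_sum_abs _ _).trans (Finset.sum_le_sum fun j _ => ?_)
  rw [← mul_sub, abs_mul, Int.cast_abs]
  exact mul_le_mul_of_nonneg_left (hwv j) (abs_nonneg _)

variable {l}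

theorem pairing_le_pairing (hl : ∀ j, 0 ≤ l j) (hwv : ∀ j, v j ≤ w j) :
    pairing l v ≤ pairing l w :=
  Finset.sum_le_sum fun j _ => mul_le_mul_of_nonneg_left (hwv j) (by exact_mod_cast hl j)

theorem pairing_nonneg (hl : ∀ j, 0 ≤ l j) (hw : ∀ j, 0 ≤ w j) : 0 ≤ pairing l w :=
  Finset.sum_nonneg fun j _ => mul_nonneg (by exact_mod_cast hl j) (hw j)

theorem le_pairing_of_mem_support (hl : ∀ j, 0 ≤ l j) (hw : ∀ j, 0 ≤ w j) {j : ℕ}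
    (hj : j ∈ l.support) : w j ≤ pairing l w := by
  have hlj : (1 : ℝ) ≤ l j := by
    exact_mod_cast lt_of_le_of_ne (hl j) (Finsupp.mem_support_iff.mp hj).symm
  calc w j ≤ (l j : ℝ) * w j := le_mul_of_one_le_left (hw j) hlj
    _ ≤ pairing l w := Finset.single_le_sum (f := fun i => (l i : ℝ) * w i)
        (fun i _ => mul_nonneg (by exact_mod_cast hl i) (hw i)) hj

theorem support_eq_pair_of_pos_of_neg (hl : ∑ i ∈ l.support, |l i| ≤ 2) {j k : ℕ}
    (hj : 0 < l j) (hk : l k < 0) : l.support = {j, k} ∧ l j = 1 ∧ l k = -1 := by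
  have hjk : j ≠ k := by rintro rfl; omega
  have hj_mem : j ∈ l.support := Finsupp.mem_support_iff.mpr hj.ne'
  have hk_mem : k ∈ l.support := Finsupp.mem_support_iff.mpr hk.ne
  have hjk_sub : {j, k} ⊆ l.support := by simp [Finset.insert_subset_iff, hj_mem, hk_mem]
  have sum_le {s : Finset ℕ} (hs : s ⊆ l.support) : ∑ i ∈ s, |l i| ≤ 2 :=
    (Finset.sum_le_sum_of_subset_of_nonneg hs fun i _ _ => abs_nonneg _).trans hl
  have hjk_le := sum_le hjk_sub
  rw [Finset.sum_pair hjk, abs_of_pos hj, abs_of_neg hk] at hjk_le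
  refine ⟨Finset.Subset.antisymm (fun i hi => ?_) hjk_sub, by omega, by omega⟩
  by_contra hijk
  have hi0 := Int.one_le_abs (Finsupp.mem_support_iff.mp hi)
  have := sum_le (Finset.insert_subset hi hjk_sub)
  rw [Finset.sum_insert hijk, Finset.sum_pair hjk, abs_of_pos hj, abs_of_neg hk] at this
  omega

theorem pairing_of_support_eq_pair {j k : ℕ} (hjk : j ≠ k) (hl : l.support = {j, k})
    (hj : l j = 1) (hk : l k = -1) (w : ℕ → ℝ) : pairing l w = w j - w k := by
  simp [pairing, hl, Finset.sum_pair hjk, hj, hk, sub_eq_add_neg]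

end Pairing

theorem exists_forall_abs_abs_pairing_div_sub_one_lt {w v : ℕ → ℝ} {C : ℝ}
    (hwv : ∀ j, |w j - v j| ≤ C) (K : ℤ) {δ : ℝ} (hδ : 0 < δ) :
    ∃ N : ℝ, ∀ l : ℕ →₀ ℤ, ∑ j ∈ l.support, |l j| ≤ K → N ≤ max 1 |pairing l v| →
      |(|pairing l w|) / max 1 |pairing l v| - 1| < δ := by
  have hC : 0 ≤ C := (abs_nonneg _).trans (hwv 0)
  refine ⟨|K * C| / δ + 2, fun l hl hN => ?_⟩
  have hKC : 0 ≤ |K * C| / δ := by positivity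
  have hS : |K * C| / δ + 2 ≤ |pairing l v| := (le_max_iff.mp hN).resolve_left (by linarith)
  have hTS : |pairing l w - pairing l v| ≤ |K * C| :=
    (abs_pairing_sub_pairing_le l hwv).trans
      ((mul_le_mul_of_nonneg_right (by exact_mod_cast hl) hC).trans (le_abs_self _))
  refine (abs_abs_div_max_one_sub_one_le (by linarith)).trans_lt
    ((div_lt_iff₀ (by linarith)).mpr ?_)
  calc |pairing l w - pairing l v| ≤ |K * C| := hTS
    _ < δ * (|K * C| / δ + 2) := by rw [mul_add, mul_div_cancel₀ _ hδ.ne']; linarith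
    _ ≤ δ * |pairing l v| := by gcongr

section Frequencies

variable {m : ℝ}

theorem sq_le_sqrt_pow_four_add (hm : 0 ≤ m) (x : ℝ) : x ^ 2 ≤ √(x ^ 4 + m) :=
  (Real.le_sqrt (sq_nonneg x) (by positivity)).mpr (by nlinarith)

theorem sqrt_pow_four_add_le (hm : 0 ≤ m) (x : ℝ) : √(x ^ 4 + m) ≤ x ^ 2 + √m := by
  refine Real.sqrt_le_iff.mpr ⟨by positivity, ?_⟩
  nlinarith [Real.sq_sqrt hm, Real.sqrt_nonneg m, sq_nonneg x]

theorem abs_sq_sub_sq_le_mul_abs_sqrt_sub (hm : 0 ≤ m) {x y : ℝ} (hxy : 1 ≤ x ^ 2 + y ^ 2) :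
    |x ^ 2 - y ^ 2| ≤ (1 + 2 * √m) * |√(x ^ 4 + m) - √(y ^ 4 + m)| := by
  set A := √(x ^ 4 + m)
  set B := √(y ^ 4 + m)
  have hA := sq_le_sqrt_pow_four_add hm x
  have hB := sq_le_sqrt_pow_four_add hm y
  have hprod : |A - B| * (A + B) = |x ^ 2 - y ^ 2| * (x ^ 2 + y ^ 2) := by
    rw [← abs_of_pos (by linarith : 0 < A + B), ← abs_of_pos (by linarith : 0 < x ^ 2 + y ^ 2),
      ← abs_mul, ← abs_mul]
    congr 1
    nlinarith [Real.sq_sqrt (by positivity : 0 ≤ x ^ 4 + m),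
      Real.sq_sqrt (by positivity : 0 ≤ y ^ 4 + m)]
  have hsum : A + B ≤ (1 + 2 * √m) * (x ^ 2 + y ^ 2) := by
    nlinarith [sqrt_pow_four_add_le hm x, sqrt_pow_four_add_le hm y, Real.sqrt_nonneg m]
  refine le_of_mul_le_mul_right ?_ (by linarith : 0 < x ^ 2 + y ^ 2)
  calc |x ^ 2 - y ^ 2| * (x ^ 2 + y ^ 2) = |A - B| * (A + B) := hprod.symm
    _ ≤ |A - B| * ((1 + 2 * √m) * (x ^ 2 + y ^ 2)) :=
        mul_le_mul_of_nonneg_left hsum (abs_nonneg _)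
    _ = (1 + 2 * √m) * |A - B| * (x ^ 2 + y ^ 2) := by ring

theorem min_one_sqrt_mul_max_one_le_abs_pairing_sqrt (hm : 0 ≤ m) {l : ℕ →₀ ℤ}
    (hl : ∀ j, 0 ≤ l j) (hl0 : l ≠ 0) :
    min 1 √m * max 1 |pairing l (fun j => (j : ℝ) ^ 2)|
      ≤ |pairing l (fun j => √((j : ℝ) ^ 4 + m))| := by
  obtain ⟨j, hj⟩ := Finsupp.support_nonempty_iff.mpr hl0
  have hS : 0 ≤ pairing l (fun j => (j : ℝ) ^ 2) := pairing_nonneg hl fun j => sq_nonneg _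
  have hST := pairing_le_pairing hl fun j : ℕ => sq_le_sqrt_pow_four_add hm (j : ℝ)
  have hmT : √m ≤ pairing l (fun j => √((j : ℝ) ^ 4 + m)) :=
    (Real.sqrt_le_sqrt (le_add_of_nonneg_left (by positivity : (0 : ℝ) ≤ (j : ℝ) ^ 4))).trans
      (le_pairing_of_mem_support (w := fun j : ℕ => √((j : ℝ) ^ 4 + m)) hl
        (fun _ => Real.sqrt_nonneg _) hj)
  rw [abs_of_nonneg hS, abs_of_nonneg (hS.trans hST)]
  rcases max_cases 1 (pairing l fun j => (j : ℝ) ^ 2) with ⟨hmax, _⟩ | ⟨hmax, _⟩ <;> rw [hmax]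
  · linarith [min_le_right 1 √m]
  · nlinarith [min_le_left 1 √m, Real.sqrt_nonneg m]

theorem max_one_le_mul_abs_pairing_sqrt_of_pos_of_neg (hm : 0 ≤ m) {l : ℕ →₀ ℤ}
    (hl : ∑ i ∈ l.support, |l i| ≤ 2) {j k : ℕ} (hj : 0 < l j) (hk : l k < 0) :
    max 1 |pairing l (fun j => (j : ℝ) ^ 2)|
      ≤ (1 + 2 * √m) * |pairing l (fun j => √((j : ℝ) ^ 4 + m))| := by
  obtain ⟨hsupp, hj1, hk1⟩ := support_eq_pair_of_pos_of_neg hl hj hk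
  have hjk : j ≠ k := by rintro rfl; omega
  simp only [pairing_of_support_eq_pair hjk hsupp hj1 hk1]
  have hjk2 : 1 ≤ |(j : ℝ) ^ 2 - (k : ℝ) ^ 2| := by
    have hne : (j : ℤ) ^ 2 - (k : ℤ) ^ 2 ≠ 0 := fun h =>
      hjk (Nat.pow_left_injective two_ne_zero (by exact_mod_cast sub_eq_zero.mp h))
    exact_mod_cast Int.one_le_abs hne
  rw [max_eq_right hjk2]
  refine abs_sq_sub_sq_le_mul_abs_sqrt_sub hm ?_
  rcases le_abs'.mp hjk2 with h | h <;> nlinarith [sq_nonneg (j : ℝ), sq_nonneg (k : ℝ)]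

theorem mul_max_one_le_abs_pairing_sqrt (hm : 0 ≤ m) {l : ℕ →₀ ℤ}
    (hl : ∑ i ∈ l.support, |l i| ≤ 2) (hl0 : l ≠ 0) :
    min 1 √m / (1 + 2 * √m) * max 1 |pairing l (fun j => (j : ℝ) ^ 2)|
      ≤ |pairing l (fun j => √((j : ℝ) ^ 4 + m))| := by
  have hM : 0 ≤ max 1 |pairing l (fun j => (j : ℝ) ^ 2)| := zero_le_one.trans (le_max_left _ _)
  by_cases hmixed : ∃ j k, 0 < l j ∧ l k < 0
  · obtain ⟨j, k, hj, hk⟩ := hmixed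
    rw [div_mul_eq_mul_div, div_le_iff₀ (by positivity), mul_comm _ (1 + 2 * √m)]
    exact (mul_le_of_le_one_left hM (min_le_left _ _)).trans
      (max_one_le_mul_abs_pairing_sqrt_of_pos_of_neg hm hl hj hk)
  push Not at hmixed
  have hsigned : min 1 √m * max 1 |pairing l (fun j => (j : ℝ) ^ 2)|
      ≤ |pairing l (fun j => √((j : ℝ) ^ 4 + m))| := by
    by_cases hpos : ∀ j, 0 ≤ l j
    · exact min_one_sqrt_mul_max_one_le_abs_pairing_sqrt hm hpos hl0
    push Not at hpos
    obtain ⟨k, hk⟩ := hpos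
    have hneg : ∀ j, 0 ≤ (-l) j := fun j => by
      rw [Finsupp.neg_apply]
      exact neg_nonneg.mpr (not_lt.mp fun hj => (hmixed j k hj).not_gt hk)
    simpa [pairing_neg] using
      min_one_sqrt_mul_max_one_le_abs_pairing_sqrt hm hneg (neg_ne_zero.mpr hl0)
  refine le_trans (mul_le_mul_of_nonneg_right ?_ hM) hsigned
  exact div_le_self (by positivity) (by linarith [Real.sqrt_nonneg m])

theorem exists_pos_mul_max_one_lt_abs_pairing_sqrt (hm : 0 < m) :
    ∃ β : ℝ, 0 < β ∧ ∀ l : ℕ →₀ ℤ, ∑ j ∈ l.support, |l j| ≤ 2 →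
      pairing l (fun j => √((j : ℝ) ^ 4 + m)) ≠ 0 →
      β * max 1 |pairing l (fun j => (j : ℝ) ^ 2)|
        < |pairing l (fun j => √((j : ℝ) ^ 4 + m))| := by
  have hsqrt : 0 < √m := Real.sqrt_pos.mpr hm
  refine ⟨min 1 √m / (1 + 2 * √m) / 2, by positivity, fun l hl hT => ?_⟩
  have hl0 : l ≠ 0 := by rintro rfl; simp [pairing] at hT
  have hc : 0 < min 1 √m / (1 + 2 * √m) * max 1 |pairing l (fun j => (j : ℝ) ^ 2)| := by
    positivity
  linarith [mul_max_one_le_abs_pairing_sqrt hm.le hl hl0]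

end Frequencies

theorem beam_frequency_asymptotics (m : ℝ) (hm : 0 < m) :
    (∀ δ : ℝ, 0 < δ → ∃ N : ℝ, ∀ l : ℕ →₀ ℤ,
        (∑ j ∈ l.support, |l j|) ≤ 2 →
        N ≤ max 1 |∑ j ∈ l.support, ((j : ℝ) ^ 2 * (l j : ℝ))| →
        |(|∑ j ∈ l.support, (l j : ℝ) * Real.sqrt ((j : ℝ) ^ 4 + m)|) /
            max 1 |∑ j ∈ l.support, ((j : ℝ) ^ 2 * (l j : ℝ))| - 1| < δ) ∧
    ∃ β : ℝ, 0 < β ∧ ∀ l : ℕ →₀ ℤ,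
      (∑ j ∈ l.support, |l j|) ≤ 2 →
      (∑ j ∈ l.support, (l j : ℝ) * Real.sqrt ((j : ℝ) ^ 4 + m)) ≠ 0 →
      β * max 1 |∑ j ∈ l.support, ((j : ℝ) ^ 2 * (l j : ℝ))| <
        |∑ j ∈ l.support, (l j : ℝ) * Real.sqrt ((j : ℝ) ^ 4 + m)| := by
  have hsq (l : ℕ →₀ ℤ) : ∑ j ∈ l.support, ((j : ℝ) ^ 2 * (l j : ℝ))
      = pairing l (fun j => (j : ℝ) ^ 2) := Finset.sum_congr rfl fun _ _ => mul_comm _ _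
  have hΩ (j : ℕ) : |√((j : ℝ) ^ 4 + m) - (j : ℝ) ^ 2| ≤ √m :=
    abs_sub_le_iff.mpr ⟨by linarith [sqrt_pow_four_add_le hm.le (j : ℝ)],
      by linarith [sq_le_sqrt_pow_four_add hm.le (j : ℝ), Real.sqrt_nonneg m]⟩
  simp only [hsq]
  exact ⟨fun δ hδ => exists_forall_abs_abs_pairing_div_sub_one_lt hΩ 2 hδ,
    exists_pos_mul_max_one_lt_abs_pairing_sqrt hm⟩
end

section
/- Fix b ≥ 1 and β > 0 with β ≤ 1. Then Σ_{0≠k∈ℤ^b} |k|² / (|k|+1)^{2b+2} converges, and moreover there is an absolute constant C (independent of b) such that Σ_{0≠k∈ℤ^b} |k|² / (|k|+1)^{2b+2} ≤ C. -/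
/-!
Group the lattice points by their ℓ¹-norm `n = |k|`. Such a point is determined by its first
`b - 1` coordinates, each in `[-n, n]`, together with the sign of the last one, so the shell
`|k| = n` has at most `2 (2n+1)^(b-1) ≤ 2 (n+1)^(2b-2)` points. Against the denominator
`(n+1)^(2b+2)` this leaves a shell contribution of at most `2 n² / (n+1)⁴ ≤ 2 / n²`, and
summing over `n` gives the bound `2 ζ(2) = π² / 3`, whatever `b` is.
-/

open Finset Real

lemma sum_abs_intCast_eq_natCast_sum_natAbs {ι : Type*} (s : Finset ι) (k : ι → ℤ) :
    ∑ i ∈ s, |(k i : ℝ)| = ((∑ i ∈ s, (k i).natAbs : ℕ) : ℝ) := by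
  push_cast [Nat.cast_natAbs, Int.cast_abs]
  rfl

lemma card_filter_sum_natAbs_eq_le {m : ℕ} (s : Finset (Fin (m + 1) → ℤ)) (n : ℕ) :
    #{k ∈ s | ∑ i, (k i).natAbs = n} ≤ 2 * (2 * n + 1) ^ m := by
  set shell := {k ∈ s | ∑ i, (k i).natAbs = n}
  have hmaps : ∀ k ∈ shell, (Fin.init k, decide (0 ≤ k (Fin.last m))) ∈
      Icc (fun _ => -(n : ℤ)) (fun _ => (n : ℤ)) ×ˢ (univ : Finset Bool) := by
    intro k hk
    have hn : ∑ i, (k i).natAbs = n := (mem_filter.mp hk).2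
    simp only [mem_product, mem_Icc, mem_univ, and_true]
    have hle : ∀ i : Fin m, (k i.castSucc).natAbs ≤ n := fun i =>
      hn ▸ single_le_sum (f := fun j => (k j).natAbs) (fun j _ => Nat.zero_le _)
        (mem_univ i.castSucc)
    exact ⟨fun i => by have := hle i; simp only [Fin.init]; omega,
      fun i => by have := hle i; simp only [Fin.init]; omega⟩
  have hinj : Set.InjOn (fun k : Fin (m + 1) → ℤ => (Fin.init k, decide (0 ≤ k (Fin.last m))))
      shell := by
    intro k₁ hk₁ k₂ hk₂ heq
    obtain ⟨hinit, hsign⟩ := Prod.mk.inj heq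
    have hn₁ := (mem_filter.mp hk₁).2
    have hn₂ := (mem_filter.mp hk₂).2
    rw [Fin.sum_univ_castSucc] at hn₁ hn₂
    have hrest : ∑ i : Fin m, (k₁ i.castSucc).natAbs = ∑ i : Fin m, (k₂ i.castSucc).natAbs :=
      sum_congr rfl fun i _ => congrArg Int.natAbs (congrFun hinit i)
    have hlast : k₁ (Fin.last m) = k₂ (Fin.last m) := by
      have := decide_eq_decide.mp hsign
      omega
    rw [← Fin.snoc_init_self k₁, ← Fin.snoc_init_self k₂, hinit, hlast]
  calc #shell
      ≤ #(Icc (fun _ => -(n : ℤ)) (fun _ => (n : ℤ)) ×ˢ (univ : Finset Bool)) :=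
        card_le_card_of_injOn _ hmaps hinj
    _ = 2 * (2 * n + 1) ^ m := by
        rw [card_product, Pi.card_Icc]
        simp only [Int.card_Icc, prod_const, card_univ, Fintype.card_fin, Fintype.card_bool]
        rw [show ((n : ℤ) + 1 - -(n : ℤ)).toNat = 2 * n + 1 by omega, mul_comm]

lemma shell_weight_le_two_div_sq (m : ℕ) {x : ℝ} (hx : 0 ≤ x) :
    2 * (2 * x + 1) ^ m * (x ^ 2 / (x + 1) ^ (2 * (m + 1) + 2)) ≤ 2 / x ^ 2 := by
  rcases hx.eq_or_lt with rfl | hx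
  · simp
  have hcount : (2 * x + 1) ^ m ≤ (x + 1) ^ (2 * m) := by
    rw [pow_mul]
    exact pow_le_pow_left₀ (by positivity) (by nlinarith) m
  have hquartic : x ^ 4 ≤ (x + 1) ^ 4 := pow_le_pow_left₀ hx.le (by linarith) 4
  rw [show 2 * (m + 1) + 2 = 2 * m + 4 by ring]
  calc 2 * (2 * x + 1) ^ m * (x ^ 2 / (x + 1) ^ (2 * m + 4))
      ≤ 2 * (x + 1) ^ (2 * m) * (x ^ 2 / (x + 1) ^ (2 * m + 4)) := by gcongr
    _ = 2 * x ^ 2 / (x + 1) ^ 4 := by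
        rw [pow_add (x + 1) (2 * m) 4]
        field_simp
    _ ≤ 2 / x ^ 2 := by
        rw [div_le_div_iff₀ (by positivity) (by positivity)]
        nlinarith

lemma sum_lattice_le_pi_sq_div_three (m : ℕ) (s : Finset (Fin (m + 1) → ℤ)) :
    ∑ k ∈ s, (∑ i, |(k i : ℝ)|) ^ 2 / ((∑ i, |(k i : ℝ)|) + 1) ^ (2 * (m + 1) + 2)
      ≤ π ^ 2 / 3 := by
  set F : ℕ → ℝ := fun n => (n : ℝ) ^ 2 / ((n : ℝ) + 1) ^ (2 * (m + 1) + 2)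
  set normL1 : (Fin (m + 1) → ℤ) → ℕ := fun k => ∑ i, (k i).natAbs
  have hsummable : Summable fun n : ℕ => 2 * (1 / (n : ℝ) ^ 2) := hasSum_zeta_two.summable.mul_left 2
  calc ∑ k ∈ s, (∑ i, |(k i : ℝ)|) ^ 2 / ((∑ i, |(k i : ℝ)|) + 1) ^ (2 * (m + 1) + 2)
      = ∑ k ∈ s, F (normL1 k) := by
        simp only [F, normL1, sum_abs_intCast_eq_natCast_sum_natAbs]
    _ = ∑ n ∈ s.image normL1, #{k ∈ s | normL1 k = n} • F n := sum_comp F normL1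
    _ ≤ ∑ n ∈ s.image normL1, 2 * (1 / (n : ℝ) ^ 2) := by
        refine sum_le_sum fun n _ => ?_
        rw [nsmul_eq_mul, mul_one_div]
        calc (#{k ∈ s | normL1 k = n} : ℝ) * F n
            ≤ (2 * (2 * n + 1) ^ m : ℕ) * F n := by
              gcongr
              exact card_filter_sum_natAbs_eq_le s n
          _ ≤ 2 / (n : ℝ) ^ 2 := by
              push_cast
              exact shell_weight_le_two_div_sq m n.cast_nonneg
    _ ≤ ∑' n : ℕ, 2 * (1 / (n : ℝ) ^ 2) :=
        hsummable.sum_le_tsum _ fun n _ => by positivity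
    _ = π ^ 2 / 3 := by
        rw [tsum_mul_left, hasSum_zeta_two.tsum_eq]
        ring

theorem lattice_sum_uniform_bound :
    ∃ C : ℝ, 0 < C ∧ ∀ b : ℕ, 1 ≤ b →
      Summable (fun k : Fin b → ℤ =>
        (∑ i, |(k i : ℝ)|) ^ 2 / ((∑ i, |(k i : ℝ)|) + 1) ^ (2 * b + 2)) ∧
      ∑' k : Fin b → ℤ,
          (∑ i, |(k i : ℝ)|) ^ 2 / ((∑ i, |(k i : ℝ)|) + 1) ^ (2 * b + 2) ≤ C := by
  refine ⟨π ^ 2 / 3, by positivity, fun b hb => ?_⟩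
  obtain ⟨m, rfl⟩ : ∃ m, b = m + 1 := ⟨b - 1, by omega⟩
  have hnonneg : 0 ≤ fun k : Fin (m + 1) → ℤ =>
      (∑ i, |(k i : ℝ)|) ^ 2 / ((∑ i, |(k i : ℝ)|) + 1) ^ (2 * (m + 1) + 2) := fun k => by
    have : 0 ≤ ∑ i, |(k i : ℝ)| := sum_nonneg fun i _ => abs_nonneg _
    positivity
  have hsummable := summable_of_sum_le hnonneg (sum_lattice_le_pi_sq_div_three m)
  exact ⟨hsummable, hsummable.tsum_le_of_sum_le (sum_lattice_le_pi_sq_div_three m)⟩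
end
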